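/- For any tree T with n > 2 vertices, Toucher has a strategy in the Toucher-Isolator game on T which guarantees that the number of untouched vertices at the end of the game is at most (n − 1)/2. In particular, u(T) ≤ (n−1)/2. -/

import Mathlib

namespace ToucherIsolator

/-- A strategy for a player in the Toucher-Isolator game: given the history of
previously claimed edges (most recent first), it produces the next edge to claim. -/
def Strategy (V : Type*) : Type _ := List (Sym2 V) → Sym2 V

variable {V : Type*}

/-- The number of edges of `G`. -/
noncomputable def edgeCard (G : SimpleGraph V) : ℕ := Nat.card G.edgeSet

/-- `history turn t i n` is the list of the first `n` claimed edges (most recent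
first) when the player moving at step `m` is Toucher iff `turn m = true`,
Toucher plays strategy `t` and Isolator plays strategy `i`. -/
def history (turn : ℕ → Bool) (t i : Strategy V) : ℕ → List (Sym2 V)
  | 0 => []
  | n + 1 =>
      (if turn n then t (history turn t i n) else i (history turn t i n))
        :: history turn t i n

/-- The edge claimed at step `n` of the game. -/
def moveAt (turn : ℕ → Bool) (t i : Strategy V) (n : ℕ) : Sym2 V :=
  if turn n then t (history turn t i n) else i (history turn t i n)

/-- A strategy is legal on `G` if, whenever the history so far consists of
distinct edges of `G` and some edge of `G` is still unclaimed, it claims a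
previously unclaimed edge of `G`. -/
def Legal (G : SimpleGraph V) (s : Strategy V) : Prop :=
  ∀ h : List (Sym2 V), h.Nodup → (∀ e ∈ h, e ∈ G.edgeSet) →
    h.length < edgeCard G → s h ∈ G.edgeSet ∧ s h ∉ h

/-- The set of vertices untouched at the end of the game, i.e. incident to no
edge claimed by Toucher during the `edgeCard G` moves of the game. -/
def untouchedSet (G : SimpleGraph V) (turn : ℕ → Bool) (t i : Strategy V) : Set V :=
  { v | ∀ n < edgeCard G, turn n = true → v ∉ moveAt turn t i n }

/-- The number of untouched vertices at the end of the game. -/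
noncomputable def untouchedCount (G : SimpleGraph V) (turn : ℕ → Bool)
    (t i : Strategy V) : ℕ :=
  Nat.card (untouchedSet G turn t i)

/-- The standard turn order: Toucher moves first and the players alternate. -/
def std (n : ℕ) : Bool := n % 2 = 0

end ToucherIsolator

open ToucherIsolator SimpleGraph

/-!
Toucher may play any legal strategy. Its first edge touches some vertex `w`. Every other vertex
`u` that stays untouched had all its edges claimed by Isolator, in particular the first edge of a
shortest path from `u` to `w`; distinct vertices give distinct such edges, since along that edge
the distance to `w` strictly drops. Hence at most as many vertices stay untouched as Isolator makes
moves, namely `⌊(n - 1) / 2⌋` on a tree.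
-/

namespace SimpleGraph

variable {V : Type*} {G : SimpleGraph V}

lemma Reachable.exists_adj_dist_lt {u w : V} (h : G.Reachable u w) (hne : u ≠ w) :
    ∃ p, G.Adj u p ∧ G.dist p w < G.dist u w := by
  obtain ⟨q, hq⟩ := h.exists_walk_length_eq_dist
  cases q with
  | nil => exact absurd rfl hne
  | cons hadj q =>
    refine ⟨_, hadj, ?_⟩
    have := dist_le q
    rw [Walk.length_cons] at hq
    omega

lemma Connected.exists_injOn_incidentEdge (hG : G.Connected) (w : V) :
    ∃ f : V → Sym2 V, (∀ u ∈ ({w}ᶜ : Set V), u ∈ f u ∧ f u ∈ G.edgeSet) ∧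
      Set.InjOn f {w}ᶜ := by
  have hstep : ∀ u, ∃ p, u ≠ w → G.Adj u p ∧ G.dist p w < G.dist u w := fun u => by
    by_cases hu : u = w
    · exact ⟨u, fun h => (h hu).elim⟩
    · obtain ⟨p, hp⟩ := (hG u w).exists_adj_dist_lt hu
      exact ⟨p, fun _ => hp⟩
  choose p hp using hstep
  refine ⟨fun u => s(u, p u), fun u hu => ⟨Sym2.mem_mk_left _ _, (hp u hu).1⟩, ?_⟩
  intro u hu u' hu' h
  rcases Sym2.eq_iff.mp h with ⟨rfl, -⟩ | ⟨rfl, h'⟩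
  · rfl
  · have h₁ := (hp _ hu).2
    have h₂ := (hp _ hu').2
    rw [h'] at h₁
    omega

end SimpleGraph

namespace ToucherIsolator

open Finset

variable {V : Type*} {G : SimpleGraph V} {turn : ℕ → Bool} {t i : Strategy V}

lemma exists_mem_edgeSet_notMem_of_length_lt {l : List (Sym2 V)} (hl : l.length < edgeCard G) :
    ∃ e ∈ G.edgeSet, e ∉ l := by
  classical
  by_contra! h
  have hsub : G.edgeSet ⊆ ↑l.toFinset := fun e he => List.mem_toFinset.mpr (h e he)
  have := Set.ncard_le_ncard hsub (finite_toSet _)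
  rw [Set.ncard_coe_finset, ← Nat.card_coe_set_eq] at this
  exact absurd (this.trans l.toFinset_card_le) (not_le.mpr hl)

theorem exists_legal_strategy [Nonempty V] (G : SimpleGraph V) :
    ∃ s : Strategy V, Legal G s := by
  have : Nonempty (Sym2 V) := ⟨Sym2.diag (Classical.arbitrary V)⟩
  exact ⟨fun h => Classical.epsilon fun e => e ∈ G.edgeSet ∧ e ∉ h, fun _ _ _ hl =>
    Classical.epsilon_spec (by simpa using exists_mem_edgeSet_notMem_of_length_lt hl)⟩

lemma length_history (n : ℕ) : (history turn t i n).length = n := by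
  induction n with
  | zero => rfl
  | succ n ih => simp [history, ih]

lemma mem_history_iff {n : ℕ} {e : Sym2 V} :
    e ∈ history turn t i n ↔ ∃ k < n, moveAt turn t i k = e := by
  induction n with
  | zero => simp [history]
  | succ n ih =>
    rw [history, List.mem_cons, ih, ← moveAt]
    constructor
    · rintro (rfl | ⟨k, hk, rfl⟩)
      exacts [⟨n, n.lt_succ_self, rfl⟩, ⟨k, hk.trans n.lt_succ_self, rfl⟩]
    · rintro ⟨k, hk, rfl⟩
      rcases Nat.lt_succ_iff_lt_or_eq.mp hk with hk | rfl
      exacts [Or.inr ⟨k, hk, rfl⟩, Or.inl rfl]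

lemma history_nodup_and_subset (ht : Legal G t) (hi : Legal G i) {n : ℕ}
    (hn : n ≤ edgeCard G) :
    (history turn t i n).Nodup ∧ ∀ e ∈ history turn t i n, e ∈ G.edgeSet := by
  induction n with
  | zero => simp [history]
  | succ n ih =>
    obtain ⟨hnd, hsub⟩ := ih (by omega)
    have hlen : (history turn t i n).length < edgeCard G := by rw [length_history]; omega
    have hmove : moveAt turn t i n ∈ G.edgeSet ∧ moveAt turn t i n ∉ history turn t i n := by
      unfold moveAt
      split
      exacts [ht _ hnd hsub hlen, hi _ hnd hsub hlen]
    rw [history, ← moveAt]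
    exact ⟨List.nodup_cons.mpr ⟨hmove.2, hnd⟩, by simpa [hmove.1] using hsub⟩

lemma exists_moveAt_eq [Finite V] (ht : Legal G t) (hi : Legal G i) {e : Sym2 V}
    (he : e ∈ G.edgeSet) : ∃ k < edgeCard G, moveAt turn t i k = e := by
  classical
  obtain ⟨hnd, hsub⟩ := history_nodup_and_subset (turn := turn) ht hi le_rfl
  have hcard :
      G.edgeSet.ncard ≤ ((history turn t i (edgeCard G)).toFinset : Set (Sym2 V)).ncard := by
    rw [Set.ncard_coe_finset, List.toFinset_card_of_nodup hnd, length_history,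
      edgeCard, Nat.card_coe_set_eq]
  have heq := Set.eq_of_subset_of_ncard_le (fun e he => hsub e (List.mem_toFinset.mp he))
    hcard (Set.toFinite _)
  rw [← mem_history_iff, ← List.mem_toFinset, ← mem_coe, heq]
  exact he

lemma untouchedCount_le_card_isolator_moves [Finite V] (ht : Legal G t) (hi : Legal G i)
    {S : Set V} {f : V → Sym2 V} (hU : untouchedSet G turn t i ⊆ S)
    (hf : ∀ u ∈ S, u ∈ f u ∧ f u ∈ G.edgeSet) (hinj : S.InjOn f) :
    untouchedCount G turn t i ≤ #{k ∈ range (edgeCard G) | turn k = false} := by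
  set I : Finset ℕ := {k ∈ range (edgeCard G) | turn k = false}
  have hmaps : f '' untouchedSet G turn t i ⊆ moveAt turn t i '' I := by
    rintro _ ⟨u, hu, rfl⟩
    obtain ⟨hmem, hedge⟩ := hf u (hU hu)
    obtain ⟨k, hk, hke⟩ := exists_moveAt_eq (turn := turn) ht hi hedge
    refine ⟨k, ?_, hke⟩
    simp only [I, coe_filter, mem_range, Set.mem_ofPred_eq]
    exact ⟨hk, Bool.eq_false_iff.mpr fun hturn => hu k hk hturn (hke ▸ hmem)⟩
  calc untouchedCount G turn t i
      = (f '' untouchedSet G turn t i).ncard :=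
        (Nat.card_coe_set_eq _).trans ((hinj.mono hU).ncard_image).symm
    _ ≤ (moveAt turn t i '' I).ncard := Set.ncard_le_ncard hmaps (Set.toFinite _)
    _ ≤ (I : Set ℕ).ncard := Set.ncard_image_le (finite_toSet _)
    _ = #I := Set.ncard_coe_finset I

lemma card_filter_std_eq_false (m : ℕ) :
    #{k ∈ range m | std k = false} = m / 2 := by
  induction m with
  | zero => rfl
  | succ m ih =>
    rw [range_add_one, filter_insert]
    split_ifs with h
    · simp only [std, decide_eq_false_iff_not] at h
      rw [card_insert_of_notMem (by simp), ih]
      omega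
    · simp only [std, decide_eq_false_iff_not, not_not] at h
      rw [ih]
      omega

theorem untouchedCount_std_le_of_connected [Finite V] (hG : G.Connected) (ht : Legal G t)
    (hi : Legal G i) (hpos : 0 < edgeCard G) :
    untouchedCount G std t i ≤ edgeCard G / 2 := by
  obtain ⟨w, hw⟩ : ∃ w, w ∈ moveAt std t i 0 := ⟨_, Sym2.out_fst_mem _⟩
  have hU : untouchedSet G std t i ⊆ {w}ᶜ := fun v hv hvw => hv 0 hpos rfl (hvw ▸ hw)
  obtain ⟨f, hf, hinj⟩ := hG.exists_injOn_incidentEdge w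
  rw [← card_filter_std_eq_false]
  exact untouchedCount_le_card_isolator_moves ht hi hU hf hinj

end ToucherIsolator

/-- Theorem 7 (upper bound): on a tree with `n > 2` vertices, Toucher can
guarantee at most `(n - 1)/2` untouched vertices. -/
theorem toucher_guarantee_tree
    {V : Type*} [Fintype V] (T : SimpleGraph V) (hT : T.IsTree)
    (hn : 2 < Fintype.card V) :
    ∃ t : Strategy V, Legal T t ∧ ∀ i : Strategy V, Legal T i →
      (untouchedCount T std t i : ℝ) ≤ ((Fintype.card V : ℝ) - 1) / 2 := by
  have : Nonempty V := Fintype.card_pos_iff.mp (by omega)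
  have hm : edgeCard T + 1 = Fintype.card V := by
    rw [← Nat.card_eq_fintype_card]
    exact (isTree_iff_connected_and_card.mp hT).2
  obtain ⟨t, ht⟩ := exists_legal_strategy T
  refine ⟨t, ht, fun i hi => ?_⟩
  have hle := untouchedCount_std_le_of_connected hT.connected ht hi (by omega)
  have hle' : (2 * untouchedCount T std t i + 1 : ℝ) ≤ Fintype.card V := by
    exact_mod_cast (show 2 * untouchedCount T std t i + 1 ≤ Fintype.card V by omega)
  linarith
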